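/- Let f be analytic on the unit disk with f(0)=0, f'(0)=1, satisfying Re[(1-z+z^2)f'(z)] > 0 for all |z|<1. Then γ_1 = a_2/2 satisfies |γ_1| ≤ 3/4, and the bound is sharp. -/

import Mathlib

open Metric Complex Set

/-!
With `p z = (1 - z + z ^ 2) * f' z` we have `p 0 = 1` and `Re p > 0`, so Carathéodory's lemma
(Schwarz's lemma for the Cayley transform `(p - 1) / (p + 1)`) gives `‖p' 0‖ ≤ 2`.
Differentiating the product, `p' 0 = f'' 0 - 1`, hence `‖f'' 0‖ ≤ 3` and
`‖γ₁‖ = ‖f'' 0‖ / 4 ≤ 3 / 4`. Equality holds for the primitive of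
`(1 + z) / ((1 - z) * (1 - z + z ^ 2))` vanishing at `0`, for which
`p z = (1 + z) / (1 - z)` and `f'' 0 = 3`.
-/

lemma norm_sub_one_lt_norm_add_one {w : ℂ} (hw : 0 < w.re) : ‖w - 1‖ < ‖w + 1‖ := by
  rw [← sq_lt_sq₀ (norm_nonneg _) (norm_nonneg _), Complex.sq_norm, Complex.sq_norm]
  simp only [normSq_apply, add_re, sub_re, one_re, add_im, sub_im, one_im]
  nlinarith

theorem norm_deriv_le_two_div_of_re_pos {p : ℂ → ℂ} {c : ℂ} {R : ℝ} (hR : 0 < R)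
    (hp : DifferentiableOn ℂ p (ball c R)) (hre : ∀ z ∈ ball c R, 0 < (p z).re)
    (hc : p c = 1) : ‖deriv p c‖ ≤ 2 / R := by
  have hlt : ∀ z ∈ ball c R, ‖p z - 1‖ < ‖p z + 1‖ := fun z hz =>
    norm_sub_one_lt_norm_add_one (hre z hz)
  have hne : ∀ z ∈ ball c R, p z + 1 ≠ 0 := fun z hz =>
    norm_pos_iff.mp ((norm_nonneg _).trans_lt (hlt z hz))
  set w : ℂ → ℂ := fun z => (p z - 1) / (p z + 1)
  have hw : DifferentiableOn ℂ w (ball c R) := (hp.sub_const 1).div (hp.add_const 1) hne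
  have hmaps : MapsTo w (ball c R) (closedBall (w c) 1) := fun z hz => by
    simpa [w, hc, norm_div] using (div_lt_one (norm_pos_iff.mpr (hne z hz))).mpr (hlt z hz) |>.le
  have hc_mem : c ∈ ball c R := mem_ball_self hR
  have hderiv : deriv w c = deriv p c / 2 := by
    have hpc := (hp.differentiableAt (isOpen_ball.mem_nhds hc_mem)).hasDerivAt
    rw [((hpc.sub_const 1).fun_div (hpc.add_const 1) (hne c hc_mem)).deriv, hc]
    ring
  have := norm_deriv_le_div_of_mapsTo_ball hw hmaps hR
  rw [hderiv, norm_div, RCLike.norm_ofNat, div_le_iff₀ two_pos] at this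
  exact this.trans_eq (by ring)

lemma iteratedDeriv_two_eq_deriv_mul_add_one {f : ℂ → ℂ}
    (hf : DifferentiableAt ℂ (deriv f) 0) (h1 : deriv f 0 = 1) :
    iteratedDeriv 2 f 0 = deriv (fun z => (1 - z + z ^ 2) * deriv f z) 0 + 1 := by
  have hq : HasDerivAt (fun z : ℂ => 1 - z + z ^ 2) (2 * 0 - 1) 0 := by
    simpa using ((hasDerivAt_id (0:ℂ)).const_sub 1).fun_add (hasDerivAt_pow 2 (0:ℂ))
  rw [(hq.fun_mul hf.hasDerivAt).deriv, iteratedDeriv_succ, iteratedDeriv_one, h1]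
  ring

theorem norm_iteratedDeriv_two_le_three {f : ℂ → ℂ} (hf : AnalyticOn ℂ f (ball 0 1))
    (h1 : deriv f 0 = 1) (hre : ∀ z ∈ ball (0:ℂ) 1, 0 < ((1 - z + z ^ 2) * deriv f z).re) :
    ‖iteratedDeriv 2 f 0‖ ≤ 3 := by
  have hdf : AnalyticOnNhd ℂ (deriv f) (ball 0 1) :=
    (isOpen_ball.analyticOn_iff_analyticOnNhd.mp hf).deriv
  have hp : DifferentiableOn ℂ (fun z => (1 - z + z ^ 2) * deriv f z) (ball 0 1) :=
    DifferentiableOn.mul (by fun_prop) hdf.differentiableOn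
  have hcar := norm_deriv_le_two_div_of_re_pos one_pos hp hre (by simp [h1])
  rw [iteratedDeriv_two_eq_deriv_mul_add_one (hdf 0 (mem_ball_self one_pos)).differentiableAt h1]
  calc _ ≤ ‖deriv (fun z => (1 - z + z ^ 2) * deriv f z) 0‖ + ‖(1:ℂ)‖ := norm_add_le _ _
    _ ≤ 2 / 1 + 1 := by rw [norm_one]; gcongr
    _ = 3 := by norm_num

lemma one_sub_ne_zero_of_mem_ball {z : ℂ} (hz : z ∈ ball (0:ℂ) 1) : 1 - z ≠ 0 :=
  sub_ne_zero.mpr fun h => by simp [← h] at hz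

lemma one_sub_add_sq_ne_zero_of_mem_ball {z : ℂ} (hz : z ∈ ball (0:ℂ) 1) :
    1 - z + z ^ 2 ≠ 0 := by
  have hz' : ‖z‖ < 1 := mem_ball_zero_iff.mp hz
  intro h
  have : z ^ 3 = -1 := by linear_combination (1 + z) * h
  have := congrArg norm this
  rw [norm_neg, norm_one, norm_pow] at this
  exact (pow_lt_one₀ (norm_nonneg z) hz' three_ne_zero).ne this

lemma re_one_add_div_one_sub_pos {z : ℂ} (hz : z ∈ ball (0:ℂ) 1) :
    0 < ((1 + z) / (1 - z)).re := by
  have hz' : normSq z < 1 := by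
    rw [← Complex.sq_norm]
    exact pow_lt_one₀ (norm_nonneg z) (mem_ball_zero_iff.mp hz) two_ne_zero
  rw [div_re, ← add_div]
  refine div_pos ?_ (normSq_pos.mpr (one_sub_ne_zero_of_mem_ball hz))
  rw [normSq_apply] at hz'
  simp only [add_re, add_im, sub_re, sub_im, one_re, one_im]
  nlinarith

lemma exists_primitive_one_add_div_one_sub_mul :
    ∃ f : ℂ → ℂ, f 0 = 0 ∧
      ∀ z ∈ ball (0:ℂ) 1, HasDerivAt f ((1 + z) / ((1 - z) * (1 - z + z ^ 2))) z := by
  refine (DifferentiableOn.isExactOn_ball ?_).with_val_at 0 0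
  exact DifferentiableOn.div (by fun_prop) (by fun_prop) fun z hz =>
    mul_ne_zero (one_sub_ne_zero_of_mem_ball hz) (one_sub_add_sq_ne_zero_of_mem_ball hz)

lemma deriv_one_add_div_one_sub_zero : deriv (fun z : ℂ => (1 + z) / (1 - z)) 0 = 2 := by
  have h := ((hasDerivAt_id' (0:ℂ)).const_add 1).fun_div ((hasDerivAt_id' (0:ℂ)).const_sub 1)
    (by norm_num)
  rw [h.deriv]; norm_num

theorem exists_iteratedDeriv_two_eq_three :
    ∃ f : ℂ → ℂ, AnalyticOn ℂ f (ball 0 1) ∧ f 0 = 0 ∧ deriv f 0 = 1 ∧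
      (∀ z ∈ ball (0:ℂ) 1, 0 < ((1 - z + z ^ 2) * deriv f z).re) ∧
      iteratedDeriv 2 f 0 = 3 := by
  obtain ⟨f, hf0, hf⟩ := exists_primitive_one_add_div_one_sub_mul
  have hball : (0:ℂ) ∈ ball (0:ℂ) 1 := mem_ball_self one_pos
  have hp : ∀ z ∈ ball (0:ℂ) 1, (1 - z + z ^ 2) * deriv f z = (1 + z) / (1 - z) := by
    intro z hz
    have h₁ := one_sub_ne_zero_of_mem_ball hz
    have h₂ := one_sub_add_sq_ne_zero_of_mem_ball hz
    rw [(hf z hz).deriv]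
    field_simp
  have hfa : AnalyticOnNhd ℂ f (ball 0 1) :=
    DifferentiableOn.analyticOnNhd (fun z hz => (hf z hz).differentiableAt.differentiableWithinAt)
      isOpen_ball
  have hf1 : deriv f 0 = 1 := by simp [(hf 0 hball).deriv]
  have hp_eventually := Filter.eventuallyEq_of_mem (isOpen_ball.mem_nhds hball) hp
  refine ⟨f, hfa.analyticOn, hf0, hf1,
    fun z hz => hp z hz ▸ re_one_add_div_one_sub_pos hz, ?_⟩
  rw [iteratedDeriv_two_eq_deriv_mul_add_one (hfa 0 hball).deriv.differentiableAt hf1,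
    hp_eventually.deriv_eq, deriv_one_add_div_one_sub_zero]
  norm_num

theorem F3_gamma1 :
    (∀ f : ℂ → ℂ, AnalyticOn ℂ f (ball 0 1) → f 0 = 0 → deriv f 0 = 1 →
      (∀ z ∈ ball (0:ℂ) 1, 0 < ((1 - z + z^2) * deriv f z).re) →
      ‖(iteratedDeriv 2 f 0 / 2) / 2‖ ≤ 3/4) ∧
    ∃ f : ℂ → ℂ, AnalyticOn ℂ f (ball 0 1) ∧ f 0 = 0 ∧ deriv f 0 = 1 ∧
      (∀ z ∈ ball (0:ℂ) 1, 0 < ((1 - z + z^2) * deriv f z).re) ∧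
      ‖(iteratedDeriv 2 f 0 / 2) / 2‖ = 3/4 := by
  have quarter (a : ℂ) : ‖a / 2 / 2‖ = ‖a‖ / 4 := by
    rw [norm_div, norm_div, RCLike.norm_ofNat]; ring
  refine ⟨fun f hf _ h1 hre => ?_, ?_⟩
  · rw [quarter]
    linarith [norm_iteratedDeriv_two_le_three hf h1 hre]
  · obtain ⟨f, hf, hf0, hf1, hre, h2⟩ := exists_iteratedDeriv_two_eq_three
    exact ⟨f, hf, hf0, hf1, hre, by rw [quarter, h2]; norm_num⟩
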